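/- arXiv:2101.02551 — 2 statements merged into one kernel-verified Lean document; each statement's English description precedes it below -/
import Mathlib

section
/- Let R be an integral domain with trivial Picard group. If every nonzero proper ideal of R is a finite product of molecules, then R is atomic (every nonzero nonunit is a finite product of irreducible elements). -/
/-!
The factorization of a principal ideal `(a)` into molecules consists of invertible ideals, since
each factor divides the invertible ideal `(a)`. With trivial Picard group they are principal,
`(a) = (b₁) ⋯ (bₙ)`, and a generator of a molecule is irreducible. Hence `a` is associated to
`b₁ ⋯ bₙ`.
-/

open FractionalIdeal nonZeroDivisors

def Ideal.IsMolecule {R : Type*} [CommSemiring R] (J : Ideal R) : Prop :=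
  J ≠ ⊥ ∧ J ≠ ⊤ ∧ ∀ A B : Ideal R, J = A * B → A = ⊤ ∨ B = ⊤

theorem irreducible_of_isMolecule_span_singleton {R : Type*} [CommSemiring R]
    {b : R} (hb : (Ideal.span {b}).IsMolecule) : Irreducible b := by
  obtain ⟨-, hne_top, hsplit⟩ := hb
  refine ⟨fun hu => hne_top (Ideal.span_singleton_eq_top.mpr hu), fun x y hxy => ?_⟩
  have := hsplit _ _ (by rw [hxy, Ideal.span_singleton_mul_span_singleton])
  rwa [Ideal.span_singleton_eq_top, Ideal.span_singleton_eq_top] at this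

instance Ideal.canLiftSpanSingleton {R : Type*} [CommSemiring R] :
    CanLift (Ideal R) R (fun b => Ideal.span {b}) Submodule.IsPrincipal where
  prf I hI := ⟨hI.generator, I.span_singleton_generator⟩

theorem FractionalIdeal.isUnit_coeIdeal_span_singleton {R K : Type*} [CommRing R] [IsDomain R]
    [Field K] [Algebra R K] [IsFractionRing R K] {a : R} (ha : a ≠ 0) :
    IsUnit (Ideal.span {a} : FractionalIdeal R⁰ K) :=
  (mul_inv_cancel_iff_isUnit K).mp (coe_ideal_span_singleton_mul_inv K ha)

theorem FractionalIdeal.isUnit_coeIdeal_of_mem {R P : Type*} [CommRing R] {S : Submonoid R}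
    [CommRing P] [Algebra R P] {s : Multiset (Ideal R)} {J : Ideal R} (hJ : J ∈ s)
    (hs : IsUnit (s.prod : FractionalIdeal S P)) : IsUnit (J : FractionalIdeal S P) :=
  isUnit_of_dvd_unit (map_dvd (coeIdealHom S P) (Multiset.dvd_prod hJ)) hs

/-- A molecular domain with trivial Picard group is atomic. -/
theorem stmt_2 {R : Type*} [CommRing R] [IsDomain R]
    (hPic : ∀ I : Ideal R,
      IsUnit (I : FractionalIdeal (nonZeroDivisors R) (FractionRing R)) →
        Submodule.IsPrincipal I)
    (hmolec : ∀ I : Ideal R, I ≠ ⊥ → I ≠ ⊤ →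
      ∃ s : Multiset (Ideal R),
        (∀ J ∈ s, J ≠ ⊥ ∧ J ≠ ⊤ ∧
          ∀ A B : Ideal R, J = A * B → A = ⊤ ∨ B = ⊤) ∧ I = s.prod) :
    ∀ a : R, a ≠ 0 → ¬IsUnit a →
      ∃ f : Multiset R, (∀ b ∈ f, Irreducible b) ∧ Associated f.prod a := by
  intro a ha hau
  obtain ⟨s, hmol, hprod⟩ := hmolec (Ideal.span {a})
    (by rwa [Ne, Ideal.span_singleton_eq_bot]) (Ideal.span_singleton_ne_top hau)
  have hunit : IsUnit (s.prod : FractionalIdeal R⁰ (FractionRing R)) :=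
    hprod ▸ isUnit_coeIdeal_span_singleton ha
  lift s to Multiset R using fun J hJ => hPic J (isUnit_coeIdeal_of_mem hJ hunit)
  refine ⟨s, fun b hb => irreducible_of_isMolecule_span_singleton
    (hmol _ (Multiset.mem_map_of_mem _ hb)), ?_⟩
  rw [← Ideal.span_singleton_eq_span_singleton, ← Ideal.multiset_prod_span_singleton, hprod]
end

section
/- Let R be an integral domain such that every nonzero ideal of R is unit-cancellative and every nonzero ideal of R is divisible by only finitely many ideals of R. Then every nonzero proper ideal of R is a finite product of molecules. -/
/-!
Among the proper divisors of a nonzero ideal `I` there are only finitely many, so strong induction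
along reverse inclusion is available on them. A proper divisor `M` that is not a molecule splits as
`M = A * B` with `A` and `B` proper; both divide `I`, and unit-cancellativity of `A` and `B` makes
them strictly larger than `M`, so they are products of molecules, hence so is `M`.
-/

namespace Ideal

variable {R : Type*} [CommRing R]

def IsUnitCancellative (I : Ideal R) : Prop :=
  ∀ J : Ideal R, I = I * J → J = ⊤

def IsMolecule_s15 (J : Ideal R) : Prop :=
  J ≠ ⊥ ∧ J ≠ ⊤ ∧ ∀ A B : Ideal R, J = A * B → A = ⊤ ∨ B = ⊤

def IsMoleculeProduct (J : Ideal R) : Prop :=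
  ∃ s : Multiset (Ideal R), (∀ M ∈ s, M.IsMolecule_s15) ∧ J = s.prod

theorem IsMolecule_s15.isMoleculeProduct {J : Ideal R} (h : J.IsMolecule_s15) : J.IsMoleculeProduct :=
  ⟨{J}, by simpa using h, by simp⟩

theorem IsMoleculeProduct.mul {A B : Ideal R} :
    A.IsMoleculeProduct → B.IsMoleculeProduct → (A * B).IsMoleculeProduct
  | ⟨s, hs, hA⟩, ⟨t, ht, hB⟩ =>
    ⟨s + t, fun M hM => (Multiset.mem_add.mp hM).elim (hs M) (ht M),
      by rw [Multiset.prod_add, ← hA, ← hB]⟩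

theorem exists_eq_mul_of_not_isMolecule {J : Ideal R} (h0 : J ≠ ⊥) (hT : J ≠ ⊤)
    (h : ¬J.IsMolecule_s15) : ∃ A B : Ideal R, A ≠ ⊤ ∧ B ≠ ⊤ ∧ J = A * B := by
  simp only [IsMolecule_s15, not_and, not_forall, not_or] at h
  obtain ⟨A, B, hJ, hA, hB⟩ := h h0 hT
  exact ⟨A, B, hA, hB, hJ⟩

theorem IsUnitCancellative.lt_of_mul_ne_top {A B : Ideal R} (hA : A.IsUnitCancellative)
    (hB : B ≠ ⊤) : A * B < A :=
  lt_of_le_of_ne mul_le_left fun h => hB (hA B h.symm)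

theorem ne_bot_of_dvd {I J : Ideal R} (hI : I ≠ ⊥) (hJ : J ∣ I) : J ≠ ⊥ := by
  rintro rfl
  obtain ⟨K, rfl⟩ := hJ
  exact hI (bot_mul K)

theorem isMoleculeProduct_of_dvd {I : Ideal R} (hI : I ≠ ⊥)
    (hcanc : ∀ J : Ideal R, J ≠ ⊥ → J.IsUnitCancellative) (hfin : {J : Ideal R | J ∣ I}.Finite)
    {J : Ideal R} (hJI : J ∣ I) (hJ : J ≠ ⊤) : J.IsMoleculeProduct := by
  have hwf : {J : Ideal R | J ∣ I}.WellFoundedOn (· > ·) := hfin.wellFoundedOn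
  refine hwf.induction hJI (P := fun J => J ≠ ⊤ → J.IsMoleculeProduct) ?_ hJ
  intro M hMI ih hMT
  have hM0 : M ≠ ⊥ := ne_bot_of_dvd hI hMI
  by_cases hmol : M.IsMolecule_s15
  · exact hmol.isMoleculeProduct
  obtain ⟨A, B, hA, hB, rfl⟩ := exists_eq_mul_of_not_isMolecule hM0 hMT hmol
  have hA0 : A ≠ ⊥ := ne_bot_of_dvd hM0 (dvd_mul_right A B)
  have hB0 : B ≠ ⊥ := ne_bot_of_dvd hM0 (dvd_mul_left B A)
  have hAprod : A.IsMoleculeProduct :=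
    ih A (dvd_trans (dvd_mul_right A B) hMI) ((hcanc A hA0).lt_of_mul_ne_top hB) hA
  have hBprod : B.IsMoleculeProduct :=
    ih B (dvd_trans (dvd_mul_left B A) hMI)
      (by simpa only [mul_comm] using (hcanc B hB0).lt_of_mul_ne_top hA) hB
  exact hAprod.mul hBprod

end Ideal

theorem stmt_15_general {R : Type*} [CommRing R]
    (hcanc : ∀ I : Ideal R, I ≠ ⊥ → ∀ J : Ideal R, I = I * J → J = ⊤)
    (hfin : ∀ I : Ideal R, I ≠ ⊥ →
      {J : Ideal R | ∃ K : Ideal R, I = J * K}.Finite) :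
    ∀ I : Ideal R, I ≠ ⊥ → I ≠ ⊤ →
      ∃ s : Multiset (Ideal R),
        (∀ J ∈ s, J ≠ ⊥ ∧ J ≠ ⊤ ∧
          ∀ A B : Ideal R, J = A * B → A = ⊤ ∨ B = ⊤) ∧ I = s.prod :=
  fun I hI hIT => Ideal.isMoleculeProduct_of_dvd hI hcanc (hfin I hI) dvd_rfl hIT

/-- If every nonzero ideal of a domain is unit-cancellative and divisible by
only finitely many ideals, then every nonzero proper ideal is a finite product
of molecules. -/
theorem stmt_15 {R : Type*} [CommRing R] [IsDomain R]
    (hcanc : ∀ I : Ideal R, I ≠ ⊥ → ∀ J : Ideal R, I = I * J → J = ⊤)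
    (hfin : ∀ I : Ideal R, I ≠ ⊥ →
      {J : Ideal R | ∃ K : Ideal R, I = J * K}.Finite) :
    ∀ I : Ideal R, I ≠ ⊥ → I ≠ ⊤ →
      ∃ s : Multiset (Ideal R),
        (∀ J ∈ s, J ≠ ⊥ ∧ J ≠ ⊤ ∧
          ∀ A B : Ideal R, J = A * B → A = ⊤ ∨ B = ⊤) ∧ I = s.prod :=
  stmt_15_general hcanc hfin
end
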